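/- arXiv:2002.09378 — 2 statements merged into one kernel-verified Lean document; each statement's English description precedes it below -/
import Mathlib

section
/- Let A = ⊕_{m ∈ M} A_m be a commutative M-graded algebra with no zero divisors over a field of characteristic ≠ 2, and let a group element w act on A by graded algebra automorphisms preserving each A_m, with w² = id. Define S = {m ∈ M : A_m ≠ 0} and I = {m ∈ S : w restricted to A_m is not ± id}. Then I is an ideal of the monoid S: if m ∈ I and n ∈ S then m + n ∈ I. -/
/-- Let `A` be a commutative `M`-graded algebra with no zero divisors over a field of
characteristic ≠ 2, and `w` an involutive algebra automorphism preserving each graded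
piece. In the monoid `S = {m | A_m ≠ 0}`, the set `I` of degrees where `w` is not `± id`
is an ideal: if `m ∈ I` and `n ∈ S` then `m + n ∈ I`. -/
theorem not_pm_id_is_ideal {k M A : Type*} [Field k] [AddCommMonoid M] [DecidableEq M]
    [CommRing A] [Algebra k A] [NoZeroDivisors A] (hchar : ringChar k ≠ 2)
    (𝒜 : M → Submodule k A) [GradedAlgebra 𝒜]
    (w : A ≃ₐ[k] A) (hw2 : ∀ a, w (w a) = a) (hpres : ∀ m, ∀ a ∈ 𝒜 m, w a ∈ 𝒜 m)
    (m n : M) (hm : 𝒜 m ≠ ⊥)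
    (hmI : ¬ ((∀ a ∈ 𝒜 m, w a = a) ∨ (∀ a ∈ 𝒜 m, w a = -a)))
    (hn : 𝒜 n ≠ ⊥) :
    𝒜 (m + n) ≠ ⊥ ∧
      ¬ ((∀ a ∈ 𝒜 (m + n), w a = a) ∨ (∀ a ∈ 𝒜 (m + n), w a = -a)) := by
  push_neg at hmI
  obtain ⟨⟨a, ha, hwa⟩, ⟨a', ha', hwa'⟩⟩ := hmI
  obtain ⟨b, hb, hb0⟩ := (Submodule.ne_bot_iff _).mp hn
  have hA : Nontrivial A := nontrivial_of_ne b 0 hb0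
  have h2k : (2 : k) ≠ 0 := Ring.two_ne_zero hchar
  have h2A : (2 : A) ≠ 0 := by
    intro h
    apply h2k
    apply (algebraMap k A).injective
    rw [map_ofNat, map_zero]
    exact h
  have ne_neg : ∀ z : A, z ≠ 0 → z ≠ -z := by
    intro z hz h
    have h2 : (2 : A) * z = 0 := by
      rw [two_mul]; nth_rewrite 2 [h]; exact add_neg_cancel z
    rcases mul_eq_zero.mp h2 with h' | h'
    · exact h2A h'
    · exact hz h'
  -- antifixed nonzero element of 𝒜 m
  have hxm : a - w a ∈ 𝒜 m := Submodule.sub_mem _ ha (hpres m a ha)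
  have hx0 : a - w a ≠ 0 := sub_ne_zero.mpr (Ne.symm hwa)
  have hwx : w (a - w a) = -(a - w a) := by
    rw [map_sub, hw2, neg_sub]
  -- fixed nonzero element of 𝒜 m
  have hym : a' + w a' ∈ 𝒜 m := Submodule.add_mem _ ha' (hpres m a' ha')
  have hy0 : a' + w a' ≠ 0 := by
    intro h
    exact hwa' (eq_neg_of_add_eq_zero_right h)
  have hwy : w (a' + w a') = a' + w a' := by
    rw [map_add, hw2, add_comm]
  -- a nonzero element c of 𝒜 n with w c = c or w c = -c
  have hc : ∃ c ∈ 𝒜 n, c ≠ 0 ∧ (w c = c ∨ w c = -c) := by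
    by_cases hp : b + w b = 0
    · refine ⟨b - w b, Submodule.sub_mem _ hb (hpres n b hb), ?_, Or.inr ?_⟩
      · intro h
        have hwbb : w b = -b := eq_neg_of_add_eq_zero_right hp
        rw [hwbb, sub_neg_eq_add] at h
        have h2 : (2 : A) * b = 0 := by rw [two_mul]; exact h
        rcases mul_eq_zero.mp h2 with h' | h'
        · exact h2A h'
        · exact hb0 h'
      · rw [map_sub, hw2, neg_sub]
    · refine ⟨b + w b, Submodule.add_mem _ hb (hpres n b hb), hp, Or.inl ?_⟩
      rw [map_add, hw2, add_comm]
  obtain ⟨c, hcn, hc0, hcw⟩ := hc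
  -- get u fixed nonzero and v antifixed nonzero in 𝒜 (m+n)
  have key : ∃ u ∈ 𝒜 (m + n), u ≠ 0 ∧ w u = u ∧
      ∃ v ∈ 𝒜 (m + n), v ≠ 0 ∧ w v = -v := by
    rcases hcw with hcw | hcw
    · exact ⟨(a' + w a') * c, SetLike.mul_mem_graded hym hcn,
        mul_ne_zero hy0 hc0, by rw [map_mul, hwy, hcw],
        (a - w a) * c, SetLike.mul_mem_graded hxm hcn,
        mul_ne_zero hx0 hc0, by rw [map_mul, hwx, hcw, neg_mul]⟩
    · exact ⟨(a - w a) * c, SetLike.mul_mem_graded hxm hcn,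
        mul_ne_zero hx0 hc0, by rw [map_mul, hwx, hcw, neg_mul_neg],
        (a' + w a') * c, SetLike.mul_mem_graded hym hcn,
        mul_ne_zero hy0 hc0, by rw [map_mul, hwy, hcw, mul_neg]⟩
  obtain ⟨u, hu, hu0, hwu, v, hv, hv0, hwv⟩ := key
  constructor
  · exact (Submodule.ne_bot_iff _).mpr ⟨u, hu, hu0⟩
  · rintro (h | h)
    · have := h v hv
      rw [hwv] at this
      exact ne_neg v hv0 this.symm
    · have := h u hu
      rw [hwu] at this
      exact ne_neg u hu0 this
end

section
/- Let A be a commutative M-graded domain over a field of characteristic ≠ 2, w a graded involutive algebra automorphism of A as above, and suppose m, n ∈ M with A_m ≠ 0, A_n ≠ 0. If w acts on A_m with both a nonzero +1-eigenvector and a nonzero −1-eigenvector, then w acts on A_{m+n} with both a nonzero +1-eigenvector and a nonzero −1-eigenvector (in particular w is not ± id on A_{m+n}). -/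
/-- Let `A` be a commutative `M`-graded domain over a field of characteristic ≠ 2 and
`w` an involutive graded algebra automorphism. If `w` has both a nonzero `+1`-eigenvector
and a nonzero `−1`-eigenvector in `A_m`, and `A_n ≠ 0`, then `w` has both a nonzero
`+1`-eigenvector and a nonzero `−1`-eigenvector in `A_{m+n}`. -/
theorem eigenvectors_propagate {k M A : Type*} [Field k] [AddCommMonoid M] [DecidableEq M]
    [CommRing A] [Algebra k A] [NoZeroDivisors A] (hchar : ringChar k ≠ 2)
    (𝒜 : M → Submodule k A) [GradedAlgebra 𝒜]
    (w : A ≃ₐ[k] A) (hw2 : ∀ a, w (w a) = a) (hpres : ∀ m, ∀ a ∈ 𝒜 m, w a ∈ 𝒜 m)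
    (m n : M)
    (hplus : ∃ a ∈ 𝒜 m, a ≠ 0 ∧ w a = a) (hminus : ∃ b ∈ 𝒜 m, b ≠ 0 ∧ w b = -b)
    (hn : 𝒜 n ≠ ⊥) :
    (∃ a ∈ 𝒜 (m + n), a ≠ 0 ∧ w a = a) ∧ (∃ b ∈ 𝒜 (m + n), b ≠ 0 ∧ w b = -b) := by
  obtain ⟨a, ham, ha0, hwa⟩ := hplus
  obtain ⟨b, hbm, hb0, hwb⟩ := hminus
  -- pick a nonzero element of 𝒜 n
  obtain ⟨c, hcn, hc0⟩ : ∃ c ∈ 𝒜 n, c ≠ 0 := (Submodule.ne_bot_iff _).mp hn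
  -- symmetric and antisymmetric parts
  set cp := c + w c with hcp
  set cm := c - w c with hcm
  have hcpn : cp ∈ 𝒜 n := (𝒜 n).add_mem hcn (hpres n c hcn)
  have hcmn : cm ∈ 𝒜 n := (𝒜 n).sub_mem hcn (hpres n c hcn)
  have hwcp : w cp = cp := by simp [hcp, map_add, hw2, add_comm]
  have hwcm : w cm = -cm := by simp [hcm, map_sub, hw2]
  have h2 : (2 : k) ≠ 0 := Ring.two_ne_zero hchar
  have hsum : cp + cm = (2 : k) • c := by
    rw [two_smul]; simp [hcp, hcm]
  have hne : cp ≠ 0 ∨ cm ≠ 0 := by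
    by_contra h
    push_neg at h
    have : (2 : k) • c = 0 := by rw [← hsum, h.1, h.2, add_zero]
    exact hc0 ((smul_eq_zero_iff_right h2).mp this)
  rcases hne with hcp0 | hcm0
  · exact ⟨⟨a * cp, SetLike.mul_mem_graded ham hcpn, mul_ne_zero ha0 hcp0,
      by rw [map_mul, hwa, hwcp]⟩,
      ⟨b * cp, SetLike.mul_mem_graded hbm hcpn, mul_ne_zero hb0 hcp0,
      by rw [map_mul, hwb, hwcp, neg_mul]⟩⟩
  · exact ⟨⟨b * cm, SetLike.mul_mem_graded hbm hcmn, mul_ne_zero hb0 hcm0,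
      by rw [map_mul, hwb, hwcm, neg_mul_neg]⟩,
      ⟨a * cm, SetLike.mul_mem_graded ham hcmn, mul_ne_zero ha0 hcm0,
      by rw [map_mul, hwa, hwcm, mul_neg]⟩⟩
end
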